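/- arXiv:1801.03634 — 2 statements merged into one kernel-verified Lean document; each statement's English description precedes it below -/
import Mathlib

section
/- Let V : [0,1] → ℝ be the unique fixed point of the Bellman operator (T V)(π) = max{ (1−π)·r₁ + β·((1−π)·V(μ₁) + π·V(μ₀)), w + β·V(Γ(π)) } with Γ(π) = π·μ₀ + (1−π)·μ₁ and β ∈ (0,1). Then V is a convex function of π on [0,1]. -/
/-! Both branches of the Bellman operator are convex in `π` whenever `V` is: the first is affine,
the second is `V` precomposed with the affine map `Γ = lineMap μ₁ μ₀`. Hence the iterates `Tⁿ 0`
are convex, and being a `β`-contraction in the sup norm on `[0, 1]`, `T` drives them pointwise to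
its bounded fixed point `V`; pointwise limits of convex functions are convex. -/

noncomputable def bellmanT (r1 w β μ0 μ1 : ℝ) (V : ℝ → ℝ) (π : ℝ) : ℝ :=
  max ((1 - π) * r1 + β * ((1 - π) * V μ1 + π * V μ0))
      (w + β * V (π * μ0 + (1 - π) * μ1))

open Filter Topology AffineMap

theorem ConvexOn.of_tendsto {ι E : Type*} [AddCommGroup E] [Module ℝ E] {l : Filter ι} [l.NeBot]
    {s : Set E} {f : ι → E → ℝ} {g : E → ℝ} (hf : ∀ i, ConvexOn ℝ s (f i))
    (hlim : ∀ x ∈ s, Tendsto (fun i => f i x) l (𝓝 (g x))) : ConvexOn ℝ s g := by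
  obtain ⟨i⟩ := nonempty_of_neBot l
  refine ⟨(hf i).1, fun x hx y hy a b ha hb hab => ?_⟩
  have hxy : a • x + b • y ∈ s := (hf i).1 hx hy ha hb hab
  exact le_of_tendsto_of_tendsto' (hlim _ hxy)
    (((hlim x hx).const_smul a).add ((hlim y hy).const_smul b))
    fun i => (hf i).2 hx hy ha hb hab

theorem tendsto_iterate_of_contraction {α : Type*} {s : Set α} {T : (α → ℝ) → α → ℝ} {β : ℝ}
    (hβ0 : 0 ≤ β) (hβ1 : β < 1)
    (hT : ∀ f g D, (∀ x ∈ s, |f x - g x| ≤ D) → ∀ x ∈ s, |T f x - T g x| ≤ β * D)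
    {V : α → ℝ} (hV : ∀ x ∈ s, V x = T V x) {f₀ : α → ℝ} {C : ℝ}
    (hC : ∀ x ∈ s, |f₀ x - V x| ≤ C) :
    ∀ x ∈ s, Tendsto (fun n => T^[n] f₀ x) atTop (𝓝 (V x)) := by
  have hdist : ∀ n, ∀ x ∈ s, |T^[n] f₀ x - V x| ≤ β ^ n * C := by
    intro n
    induction n with
    | zero => simpa using hC
    | succ n ih =>
      intro x hx
      rw [Function.iterate_succ_apply', hV x hx, pow_succ', mul_assoc]
      exact hT _ _ _ ih x hx
  intro x hx
  have hβC : Tendsto (fun n => β ^ n * C) atTop (𝓝 0) := by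
    simpa using (tendsto_pow_atTop_nhds_zero_of_lt_one hβ0 hβ1).mul_const C
  simpa using (squeeze_zero_norm (fun n => hdist n x hx) hβC).add_const (V x)

theorem bellmanT_convexOn {r1 w β μ0 μ1 : ℝ} (hβ : 0 ≤ β) {V : ℝ → ℝ}
    (hV : ConvexOn ℝ Set.univ V) : ConvexOn ℝ Set.univ (bellmanT r1 w β μ0 μ1 V) := by
  have hleft : ConvexOn ℝ Set.univ
      (fun π : ℝ => (1 - π) * r1 + β * ((1 - π) * V μ1 + π * V μ0)) :=
    ((convexOn_id convex_univ).comp_affineMap (lineMap (r1 + β * V μ1) (β * V μ0))).congr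
      fun π _ => by simp only [Function.comp_apply, _root_.id, lineMap_apply_ring]; ring
  have hright : ConvexOn ℝ Set.univ (fun π : ℝ => w + β * V (π * μ0 + (1 - π) * μ1)) :=
    (((hV.comp_affineMap (lineMap μ1 μ0)).smul hβ).add_const w).congr
      fun π _ => by
        simp only [Pi.add_apply, Function.comp_apply, lineMap_apply_ring, smul_eq_mul]
        rw [add_comm w, add_comm (π * μ0)]
  exact hleft.sup hright

theorem abs_bellmanT_sub_le {r1 w β μ0 μ1 : ℝ} (hβ : 0 ≤ β)
    (hμ1 : μ1 ∈ Set.Icc (0:ℝ) 1) (hμ0 : μ0 ∈ Set.Icc (0:ℝ) 1) {f g : ℝ → ℝ} {D : ℝ}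
    (h : ∀ x ∈ Set.Icc (0:ℝ) 1, |f x - g x| ≤ D) {π : ℝ} (hπ : π ∈ Set.Icc (0:ℝ) 1) :
    |bellmanT r1 w β μ0 μ1 f π - bellmanT r1 w β μ0 μ1 g π| ≤ β * D := by
  obtain ⟨hπ0, hπ1⟩ := hπ
  have hΓ : π * μ0 + (1 - π) * μ1 ∈ Set.Icc (0:ℝ) 1 :=
    convex_Icc 0 1 hμ0 hμ1 hπ0 (sub_nonneg.2 hπ1) (add_sub_cancel π 1)
  have hleft : |((1 - π) * r1 + β * ((1 - π) * f μ1 + π * f μ0))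
      - ((1 - π) * r1 + β * ((1 - π) * g μ1 + π * g μ0))| ≤ β * D := by
    rw [show ∀ a b c d : ℝ, (1 - π) * r1 + β * ((1 - π) * a + π * b)
        - ((1 - π) * r1 + β * ((1 - π) * c + π * d)) = β * ((1 - π) * (a - c) + π * (b - d))
        from fun _ _ _ _ => by ring, abs_mul, abs_of_nonneg hβ]
    gcongr
    calc |(1 - π) * (f μ1 - g μ1) + π * (f μ0 - g μ0)|
        ≤ (1 - π) * |f μ1 - g μ1| + π * |f μ0 - g μ0| := by
          refine (abs_add_le _ _).trans_eq ?_
          rw [abs_mul, abs_mul, abs_of_nonneg (sub_nonneg.2 hπ1), abs_of_nonneg hπ0]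
      _ ≤ (1 - π) * D + π * D := by
          gcongr
          · exact h μ1 hμ1
          · exact h μ0 hμ0
      _ = D := by ring
  have hright : |(w + β * f (π * μ0 + (1 - π) * μ1))
      - (w + β * g (π * μ0 + (1 - π) * μ1))| ≤ β * D := by
    rw [add_sub_add_left_eq_sub, ← mul_sub, abs_mul, abs_of_nonneg hβ]
    exact mul_le_mul_of_nonneg_left (h _ hΓ) hβ
  exact (abs_max_sub_max_le_max _ _ _ _).trans (max_le hleft hright)

theorem value_function_convex_general (r1 w β μ0 μ1 : ℝ) (V : ℝ → ℝ)
    (hβ0 : 0 < β) (hβ1 : β < 1)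
    (hμ1 : μ1 ∈ Set.Icc (0:ℝ) 1) (hμ0 : μ0 ∈ Set.Icc (0:ℝ) 1)
    (hbdd : ∃ C, ∀ π ∈ Set.Icc (0:ℝ) 1, |V π| ≤ C)
    (hfix : ∀ π ∈ Set.Icc (0:ℝ) 1, V π = bellmanT r1 w β μ0 μ1 V π) :
    ConvexOn ℝ (Set.Icc (0:ℝ) 1) V := by
  obtain ⟨C, hC⟩ := hbdd
  set T := bellmanT r1 w β μ0 μ1
  have hiter : ∀ n, ConvexOn ℝ Set.univ (T^[n] fun _ => 0) :=
    Function.Iterate.rec _ (convexOn_const 0 convex_univ) fun _ => bellmanT_convexOn hβ0.le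
  have hlim := tendsto_iterate_of_contraction (T := T) hβ0.le hβ1
    (fun _ _ _ h _ hπ => abs_bellmanT_sub_le hβ0.le hμ1 hμ0 h hπ) hfix (f₀ := fun _ => 0)
    (C := C) (by simpa [abs_sub_comm] using hC)
  exact ConvexOn.of_tendsto (fun n => (hiter n).subset (Set.subset_univ _) (convex_Icc 0 1)) hlim

theorem value_function_convex (r1 w β μ0 μ1 : ℝ) (V : ℝ → ℝ)
    (hr : 0 ≤ r1) (hβ0 : 0 < β) (hβ1 : β < 1)
    (hμ1 : μ1 ∈ Set.Icc (0:ℝ) 1) (hμ0 : μ0 ∈ Set.Icc (0:ℝ) 1)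
    (hbdd : ∃ C, ∀ π ∈ Set.Icc (0:ℝ) 1, |V π| ≤ C)
    (hfix : ∀ π ∈ Set.Icc (0:ℝ) 1, V π = bellmanT r1 w β μ0 μ1 V π) :
    ConvexOn ℝ (Set.Icc (0:ℝ) 1) V :=
  value_function_convex_general r1 w β μ0 μ1 V hβ0 hβ1 hμ1 hμ0 hbdd hfix
end

section
/- Let V be the unique fixed point of the Bellman operator above with μ₀ ≥ μ₁, β ∈ (0,1), r₁ > 0. Define V_T(π) = (1−π)·r₁ + β·((1−π)·V(μ₁) + π·V(μ₀)) and V_NT(π) = w + β·V(Γ(π)). Then the difference D(π) = V_T(π) − V_NT(π) is strictly decreasing in π on [0,1]. -/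
open Set Filter Topology

theorem forall_nonpos_of_contracting_bound {α : Type*} {s : Set α} {f : α → ℝ} {β c : ℝ}
    (hβ0 : 0 ≤ β) (hβ1 : β < 1) (hc : ∀ x ∈ s, f x ≤ c)
    (hstep : ∀ ε, 0 ≤ ε → (∀ x ∈ s, f x ≤ ε) → ∀ x ∈ s, f x ≤ β * ε) :
    ∀ x ∈ s, f x ≤ 0 := by
  have hpow : ∀ n : ℕ, ∀ x ∈ s, f x ≤ β ^ n * max c 0 := by
    intro n
    induction n with
    | zero => simpa using fun x hx => (hc x hx).trans (le_max_left c 0)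
    | succ n ih => simpa only [pow_succ', mul_assoc] using hstep _ (by positivity) ih
  have hlim : Tendsto (fun n : ℕ => β ^ n * max c 0) atTop (𝓝 0) := by
    simpa using (tendsto_pow_atTop_nhds_zero_of_lt_one hβ0 hβ1).mul_const (max c 0)
  exact fun x hx => ge_of_tendsto' hlim fun n => hpow n x hx

/-- The belief map `Γ`. -/
noncomputable def beliefMap (μ0 μ1 π : ℝ) : ℝ := π * μ0 + (1 - π) * μ1

noncomputable def valueT (r1 β μ0 μ1 : ℝ) (V : ℝ → ℝ) (π : ℝ) : ℝ :=
  (1 - π) * r1 + β * ((1 - π) * V μ1 + π * V μ0)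

noncomputable def valueNT (w β μ0 μ1 : ℝ) (V : ℝ → ℝ) (π : ℝ) : ℝ :=
  w + β * V (beliefMap μ0 μ1 π)

/-- `valueT` is affine in `π` with slope `-valueTSlope`. -/
noncomputable def valueTSlope (r1 β μ0 μ1 : ℝ) (V : ℝ → ℝ) : ℝ := r1 + β * (V μ1 - V μ0)

section BellmanFixedPoint

variable {r1 w β μ0 μ1 : ℝ} {V : ℝ → ℝ}

theorem beliefMap_sub (a b : ℝ) :
    beliefMap μ0 μ1 b - beliefMap μ0 μ1 a = (b - a) * (μ0 - μ1) := by
  unfold beliefMap; ring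

theorem beliefMap_mono (hμ : μ1 ≤ μ0) {a b : ℝ} (hab : a ≤ b) :
    beliefMap μ0 μ1 a ≤ beliefMap μ0 μ1 b :=
  sub_nonneg.1 <| (beliefMap_sub a b).symm ▸ mul_nonneg (sub_nonneg.2 hab) (sub_nonneg.2 hμ)

theorem beliefMap_mem_Icc (hμ0 : μ0 ∈ Icc (0 : ℝ) 1) (hμ1 : μ1 ∈ Icc (0 : ℝ) 1) {π : ℝ}
    (hπ : π ∈ Icc (0 : ℝ) 1) : beliefMap μ0 μ1 π ∈ Icc (0 : ℝ) 1 := by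
  simpa [beliefMap, smul_eq_mul] using
    convex_Icc (0 : ℝ) 1 hμ0 hμ1 hπ.1 (sub_nonneg.2 hπ.2) (by ring)

theorem mul_sub_lt_one_of_mem_Icc (hβ0 : 0 ≤ β) (hβ1 : β < 1) (hμ0 : μ0 ∈ Icc (0 : ℝ) 1)
    (hμ1 : μ1 ∈ Icc (0 : ℝ) 1) : β * (μ0 - μ1) < 1 :=
  (mul_le_of_le_one_right hβ0 (by linarith [hμ0.2, hμ1.1])).trans_lt hβ1

theorem valueT_sub (a b : ℝ) :
    valueT r1 β μ0 μ1 V a - valueT r1 β μ0 μ1 V b = valueTSlope r1 β μ0 μ1 V * (b - a) := by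
  unfold valueT valueTSlope; ring

theorem valueNT_sub (a b : ℝ) :
    valueNT w β μ0 μ1 V a - valueNT w β μ0 μ1 V b =
      β * (V (beliefMap μ0 μ1 a) - V (beliefMap μ0 μ1 b)) := by
  unfold valueNT; ring

theorem sub_le_of_bellmanT_fixed
    (hfix : ∀ π ∈ Icc (0 : ℝ) 1, V π = bellmanT r1 w β μ0 μ1 V π) {a b : ℝ}
    (ha : a ∈ Icc (0 : ℝ) 1) (hb : b ∈ Icc (0 : ℝ) 1) :
    V a - V b ≤ max (valueT r1 β μ0 μ1 V a - valueT r1 β μ0 μ1 V b)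
      (valueNT w β μ0 μ1 V a - valueNT w β μ0 μ1 V b) := by
  rw [hfix a ha, hfix b hb]
  exact max_sub_max_le_max _ _ _ _

theorem antitoneOn_of_bellmanT_fixed (hr : 0 ≤ r1) (hβ0 : 0 ≤ β) (hβ1 : β < 1)
    (hμ1 : μ1 ∈ Icc (0 : ℝ) 1) (hμ0 : μ0 ∈ Icc (0 : ℝ) 1) (hμ : μ1 ≤ μ0)
    (hbdd : ∃ C, ∀ π ∈ Icc (0 : ℝ) 1, |V π| ≤ C)
    (hfix : ∀ π ∈ Icc (0 : ℝ) 1, V π = bellmanT r1 w β μ0 μ1 V π) :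
    AntitoneOn V (Icc 0 1) := by
  obtain ⟨C, hC⟩ := hbdd
  have key := forall_nonpos_of_contracting_bound (c := 2 * C)
    (f := fun p : ℝ × ℝ => V p.2 - V p.1)
    (s := {p | p.1 ∈ Icc 0 1 ∧ p.2 ∈ Icc 0 1 ∧ p.1 ≤ p.2}) hβ0 hβ1 ?bound ?step
  · exact fun a ha b hb hab => sub_nonpos.1 (key (a, b) ⟨ha, hb, hab⟩)
  case bound =>
    rintro ⟨a, b⟩ ⟨ha, hb, -⟩
    linarith [abs_le.1 (hC a ha), abs_le.1 (hC b hb)]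
  case step =>
    rintro ε hε ih ⟨a, b⟩ ⟨ha, hb, hab⟩
    refine (sub_le_of_bellmanT_fixed hfix hb ha).trans (max_le ?_ ?_)
    · have hgap : V μ0 - V μ1 ≤ ε := ih (μ1, μ0) ⟨hμ1, hμ0, hμ⟩
      have hweighted : (b - a) * (V μ0 - V μ1) ≤ ε := by nlinarith [ha.1, hb.2]
      have hslope : valueT r1 β μ0 μ1 V b - valueT r1 β μ0 μ1 V a =
          -(r1 * (b - a)) + β * ((b - a) * (V μ0 - V μ1)) := by
        rw [valueT_sub, valueTSlope]; ring
      rw [hslope]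
      linarith [mul_nonneg hr (sub_nonneg.2 hab), mul_le_mul_of_nonneg_left hweighted hβ0]
    · rw [valueNT_sub]
      exact mul_le_mul_of_nonneg_left (ih (beliefMap μ0 μ1 a, beliefMap μ0 μ1 b)
        ⟨beliefMap_mem_Icc hμ0 hμ1 ha, beliefMap_mem_Icc hμ0 hμ1 hb, beliefMap_mono hμ hab⟩) hβ0

theorem monotoneOn_add_valueTSlope_mul_of_bellmanT_fixed (hr : 0 ≤ r1) (hβ0 : 0 ≤ β)
    (hβ1 : β < 1) (hμ1 : μ1 ∈ Icc (0 : ℝ) 1) (hμ0 : μ0 ∈ Icc (0 : ℝ) 1) (hμ : μ1 ≤ μ0)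
    (hbdd : ∃ C, ∀ π ∈ Icc (0 : ℝ) 1, |V π| ≤ C)
    (hfix : ∀ π ∈ Icc (0 : ℝ) 1, V π = bellmanT r1 w β μ0 μ1 V π) :
    MonotoneOn (fun x => V x + valueTSlope r1 β μ0 μ1 V * x) (Icc 0 1) := by
  set K := valueTSlope r1 β μ0 μ1 V
  have hK : 0 ≤ K := add_nonneg hr <| mul_nonneg hβ0 <| sub_nonneg.2 <|
    antitoneOn_of_bellmanT_fixed hr hβ0 hβ1 hμ1 hμ0 hμ hbdd hfix hμ1 hμ0 hμ
  obtain ⟨C, hC⟩ := hbdd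
  have key := forall_nonpos_of_contracting_bound (c := 2 * C)
    (f := fun p : ℝ × ℝ => V p.1 - V p.2 - K * (p.2 - p.1))
    (s := {p | p.1 ∈ Icc 0 1 ∧ p.2 ∈ Icc 0 1 ∧ p.1 ≤ p.2}) hβ0 hβ1 ?bound ?step
  · intro a ha b hb hab
    linarith [key (a, b) ⟨ha, hb, hab⟩]
  case bound =>
    rintro ⟨a, b⟩ ⟨ha, hb, hab⟩
    linarith [abs_le.1 (hC a ha), abs_le.1 (hC b hb), mul_nonneg hK (sub_nonneg.2 hab)]
  case step =>
    rintro ε hε ih ⟨a, b⟩ ⟨ha, hb, hab⟩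
    have hKab : 0 ≤ K * (b - a) := mul_nonneg hK (sub_nonneg.2 hab)
    suffices V a - V b ≤ K * (b - a) + β * ε by dsimp only; linarith
    refine (sub_le_of_bellmanT_fixed hfix ha hb).trans (max_le ?_ ?_)
    · rw [valueT_sub]
      linarith [mul_nonneg hβ0 hε]
    · have hΓ : V (beliefMap μ0 μ1 a) - V (beliefMap μ0 μ1 b) ≤
          K * ((b - a) * (μ0 - μ1)) + ε := by
        have := ih (beliefMap μ0 μ1 a, beliefMap μ0 μ1 b)
          ⟨beliefMap_mem_Icc hμ0 hμ1 ha, beliefMap_mem_Icc hμ0 hμ1 hb, beliefMap_mono hμ hab⟩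
        rw [← beliefMap_sub]
        linarith
      have hshrink : β * (K * ((b - a) * (μ0 - μ1))) ≤ K * (b - a) := by
        calc β * (K * ((b - a) * (μ0 - μ1))) = K * (b - a) * (β * (μ0 - μ1)) := by ring
          _ ≤ K * (b - a) :=
            mul_le_of_le_one_right hKab (mul_sub_lt_one_of_mem_Icc hβ0 hβ1 hμ0 hμ1).le
      rw [valueNT_sub]
      linarith [mul_le_mul_of_nonneg_left hΓ hβ0]

end BellmanFixedPoint

theorem q_difference_strict_anti (r1 w β μ0 μ1 : ℝ) (V : ℝ → ℝ)
    (hr : 0 < r1) (hβ0 : 0 < β) (hβ1 : β < 1)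
    (hμ1 : μ1 ∈ Set.Icc (0:ℝ) 1) (hμ0 : μ0 ∈ Set.Icc (0:ℝ) 1) (hμ : μ1 ≤ μ0)
    (hbdd : ∃ C, ∀ π ∈ Set.Icc (0:ℝ) 1, |V π| ≤ C)
    (hfix : ∀ π ∈ Set.Icc (0:ℝ) 1, V π = bellmanT r1 w β μ0 μ1 V π) :
    StrictAntiOn (fun π : ℝ =>
      ((1 - π) * r1 + β * ((1 - π) * V μ1 + π * V μ0)) -
      (w + β * V (π * μ0 + (1 - π) * μ1))) (Set.Icc (0:ℝ) 1) := by
  intro a ha b hb hab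
  show valueT r1 β μ0 μ1 V b - valueNT w β μ0 μ1 V b <
    valueT r1 β μ0 μ1 V a - valueNT w β μ0 μ1 V a
  set K := valueTSlope r1 β μ0 μ1 V
  have hK : 0 < K := add_pos_of_pos_of_nonneg hr <| mul_nonneg hβ0.le <| sub_nonneg.2 <|
    antitoneOn_of_bellmanT_fixed hr.le hβ0.le hβ1 hμ1 hμ0 hμ hbdd hfix hμ1 hμ0 hμ
  have hΓ : V (beliefMap μ0 μ1 a) - V (beliefMap μ0 μ1 b) ≤ K * ((b - a) * (μ0 - μ1)) := by
    have := monotoneOn_add_valueTSlope_mul_of_bellmanT_fixed hr.le hβ0.le hβ1 hμ1 hμ0 hμ hbdd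
      hfix (beliefMap_mem_Icc hμ0 hμ1 ha) (beliefMap_mem_Icc hμ0 hμ1 hb) (beliefMap_mono hμ hab.le)
    rw [← beliefMap_sub]
    linarith
  have hshrink : β * (K * ((b - a) * (μ0 - μ1))) < K * (b - a) := by
    calc β * (K * ((b - a) * (μ0 - μ1))) = K * (b - a) * (β * (μ0 - μ1)) := by ring
      _ < K * (b - a) := mul_lt_of_lt_one_right (mul_pos hK (sub_pos.2 hab))
          (mul_sub_lt_one_of_mem_Icc hβ0.le hβ1 hμ0 hμ1)
  have hdiff : (valueT r1 β μ0 μ1 V a - valueNT w β μ0 μ1 V a) -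
      (valueT r1 β μ0 μ1 V b - valueNT w β μ0 μ1 V b) =
      K * (b - a) - β * (V (beliefMap μ0 μ1 a) - V (beliefMap μ0 μ1 b)) := by
    rw [sub_sub_sub_comm, valueT_sub, valueNT_sub]
  linarith [mul_le_mul_of_nonneg_left hΓ hβ0.le]
end
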